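/- arXiv:1609.08733 — 2 statements merged into one kernel-verified Lean document; each statement's English description precedes it below -/
import Mathlib

section
/- Let L be a real n×n matrix and suppose [w₁ᵀ, w₂ᵀ]ᵀ ∈ ℝ^{2n} is a nonzero vector with W₁(L)·[w₁ᵀ, w₂ᵀ]ᵀ = λ·[w₁ᵀ, w₂ᵀ]ᵀ for some λ ∈ ℝ. Then λ ≠ 1, w₂ = (1−λ)⁻¹ w₁, w₁ ≠ 0, and w₁ is an eigenvector of L with eigenvalue (1 − (1−λ)²)/(1−λ), i.e. L w₁ = ((1 − (1−λ)²)/(1−λ)) w₁. -/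
/-!
Reading the eigen-equation blockwise gives `L w₁ + w₁ - w₂ = λ w₁` and `w₂ - w₁ = λ w₂`.
The second says `w₁ = (1 - λ) w₂`, so `λ = 1` would force `w₁ = 0` and then, by the first,
`w₂ = 0`. Hence `w₂ = (1 - λ)⁻¹ w₁`, and substituting into the first gives
`L w₁ = (λ - 1 + (1 - λ)⁻¹) w₁ = ((1 - (1 - λ)²) / (1 - λ)) w₁`.
-/

open Matrix

/-- The whiskered matrix `W₁(L) = [[L+I, −I], [−I, I]]`. -/
noncomputable def whisker1 {n : ℕ} (L : Matrix (Fin n) (Fin n) ℝ) :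
    Matrix (Fin n ⊕ Fin n) (Fin n ⊕ Fin n) ℝ :=
  Matrix.fromBlocks (L + 1) (-1) (-1) 1

theorem whisker1_mulVec_sumElim {n : ℕ} (L : Matrix (Fin n) (Fin n) ℝ) (w₁ w₂ : Fin n → ℝ) :
    whisker1 L *ᵥ Sum.elim w₁ w₂ = Sum.elim (L *ᵥ w₁ + w₁ - w₂) (w₂ - w₁) := by
  simp only [whisker1, fromBlocks_mulVec, Sum.elim_comp_inl, Sum.elim_comp_inr, add_mulVec,
    neg_mulVec, one_mulVec]
  congr 1
  abel

theorem whisker1_mulVec_eq_smul_iff {n : ℕ} (L : Matrix (Fin n) (Fin n) ℝ)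
    (w₁ w₂ : Fin n → ℝ) (lam : ℝ) :
    whisker1 L *ᵥ Sum.elim w₁ w₂ = lam • Sum.elim w₁ w₂ ↔
      L *ᵥ w₁ + w₁ - w₂ = lam • w₁ ∧ w₂ - w₁ = lam • w₂ := by
  have smul_elim : lam • Sum.elim w₁ w₂ = Sum.elim (lam • w₁) (lam • w₂) :=
    (Sum.comp_elim (lam • ·) w₁ w₂)
  rw [whisker1_mulVec_sumElim, smul_elim, Sum.elim_eq_iff]

theorem whisker1_eigenvector_restrict {n : ℕ} (L : Matrix (Fin n) (Fin n) ℝ)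
    (w₁ w₂ : Fin n → ℝ) (lam : ℝ)
    (hne : Sum.elim w₁ w₂ ≠ 0)
    (heig : (whisker1 L).mulVec (Sum.elim w₁ w₂) = lam • Sum.elim w₁ w₂) :
    lam ≠ 1 ∧ w₂ = (1 - lam)⁻¹ • w₁ ∧ w₁ ≠ 0 ∧
    L.mulVec w₁ = ((1 - (1 - lam) ^ 2) / (1 - lam)) • w₁ := by
  obtain ⟨hnode, hleaf⟩ := (whisker1_mulVec_eq_smul_iff L w₁ w₂ lam).mp heig
  have hw₁ : w₁ = (1 - lam) • w₂ := by linear_combination (norm := module) -hleaf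
  have hlam : lam ≠ 1 := by
    rintro rfl
    have hw₁0 : w₁ = 0 := by simpa using hw₁
    have hw₂0 : w₂ = 0 := by simpa [hw₁0] using hnode
    exact hne (by rw [hw₁0, hw₂0, Sum.elim_zero_zero])
  have hgap : 1 - lam ≠ 0 := sub_ne_zero.mpr hlam.symm
  have hw₂ : w₂ = (1 - lam)⁻¹ • w₁ := by rw [hw₁, smul_smul, inv_mul_cancel₀ hgap, one_smul]
  refine ⟨hlam, hw₂, fun hw₁0 => hne ?_, ?_⟩
  · rw [hw₂, hw₁0, smul_zero, Sum.elim_zero_zero]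
  · have hcoeff : (1 - (1 - lam) ^ 2) / (1 - lam) = (1 - lam)⁻¹ - (1 - lam) := by
      field_simp
    rw [hcoeff]
    linear_combination (norm := module) hnode + hw₂
end

section
/- For any real n×n matrix L, no real number λ with (λ−1)(λ² − 3λ + 1) = 0 is an eigenvalue of the path-whiskered matrix W₂(L): if W₂(L)·v = λ·v with such a λ, then v = 0. -/
open Matrix

/-- The path-whiskered matrix
`W₂(L) = [[L+2I, −I, −I, 0], [−I, I, 0, 0], [−I, 0, 2I, −I], [0, 0, −I, I]]`. -/
noncomputable def whisker2 {n : ℕ} (L : Matrix (Fin n) (Fin n) ℝ) :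
    Matrix ((Fin n ⊕ Fin n) ⊕ (Fin n ⊕ Fin n)) ((Fin n ⊕ Fin n) ⊕ (Fin n ⊕ Fin n)) ℝ :=
  Matrix.fromBlocks
    (Matrix.fromBlocks (L + 2) (-1) (-1) 1)
    (Matrix.fromBlocks (-1) 0 0 0)
    (Matrix.fromBlocks (-1) 0 0 0)
    (Matrix.fromBlocks 2 (-1) (-1) 1)

/-!
Write an eigenvector as `(x, y, z, w)`: `x` on the original nodes, `y` on the leaves, `z, w` along
the paths. The last three block rows do not involve `L`; they give `x = (1 - λ) y` and
`x = (λ² - 3λ + 1) w`, so `x = 0` at every root of `(λ - 1)(λ² - 3λ + 1)`. Then `L x = 0`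
drops out and the remaining equations force `y = z = w = 0`.
-/

theorem Sum.elim_smul_smul {α β R γ : Type*} [SMul R γ] (c : R) (a : α → γ) (b : β → γ) :
    Sum.elim (c • a) (c • b) = c • Sum.elim a b := by
  ext (i | i) <;> rfl

section

variable {K M : Type*} [Field K] [AddCommGroup M] [Module K M]

theorem pathWhisker_eigenvector_eq_zero (f : M →ₗ[K] M) {lam : K}
    (hlam : (lam - 1) * (lam ^ 2 - 3 * lam + 1) = 0) {x y z w : M}
    (hx : f x + (2 : K) • x - y - z = lam • x) (hy : y - x = lam • y)
    (hz : (2 : K) • z - x - w = lam • z) (hw : w - z = lam • w) :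
    x = 0 ∧ y = 0 ∧ z = 0 ∧ w = 0 := by
  have hxy : x = (1 - lam) • y := by linear_combination (norm := module) -hy
  have hzw : z = (1 - lam) • w := by linear_combination (norm := module) -hw
  have hxw : x = (lam ^ 2 - 3 * lam + 1) • w := by
    linear_combination (norm := module) -hz + (2 - lam) • hzw
  have hx0 : x = 0 := by
    rcases mul_eq_zero.mp hlam with h | h
    · rw [hxy, show 1 - lam = 0 by linear_combination -h, zero_smul]
    · rw [hxw, h, zero_smul]
  rw [hx0, map_zero] at hx
  have hyz : y = -z := by linear_combination (norm := module) -hx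
  rcases mul_eq_zero.mp hlam with h | h
  · obtain rfl : lam = 1 := by linear_combination h
    have hz0 : z = 0 := by simpa using hzw
    refine ⟨hx0, by simpa [hz0] using hyz, hz0, ?_⟩
    linear_combination (norm := module) -hz + hz0 - hx0
  · have h1 : 1 - lam ≠ 0 := by
      rintro h1
      obtain rfl : lam = 1 := by linear_combination -h1
      norm_num at h
    have hy0 : y = 0 := (smul_eq_zero.mp (hxy.symm.trans hx0)).resolve_left h1
    have hz0 : z = 0 := by simpa [hy0] using hyz
    exact ⟨hx0, hy0, hz0, (smul_eq_zero.mp (hzw.symm.trans hz0)).resolve_left h1⟩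

end

theorem whisker2_mulVec {n : ℕ} (L : Matrix (Fin n) (Fin n) ℝ) (x y z w : Fin n → ℝ) :
    whisker2 L *ᵥ Sum.elim (Sum.elim x y) (Sum.elim z w) =
      Sum.elim (Sum.elim (L *ᵥ x + (2 : ℝ) • x - y - z) (y - x))
        (Sum.elim ((2 : ℝ) • z - x - w) (w - z)) := by
  ext ((i | i) | (i | i)) <;> simp [whisker2, fromBlocks_mulVec, add_mulVec, neg_mulVec] <;> ring

theorem whisker2_excluded_eigenvalues {n : ℕ} (L : Matrix (Fin n) (Fin n) ℝ)
    (lam : ℝ) (hlam : (lam - 1) * (lam ^ 2 - 3 * lam + 1) = 0)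
    (v : (Fin n ⊕ Fin n) ⊕ (Fin n ⊕ Fin n) → ℝ)
    (heig : (whisker2 L).mulVec v = lam • v) :
    v = 0 := by
  obtain ⟨x, y, z, w, rfl⟩ : ∃ x y z w, v = Sum.elim (Sum.elim x y) (Sum.elim z w) :=
    ⟨(v ∘ .inl) ∘ .inl, (v ∘ .inl) ∘ .inr, (v ∘ .inr) ∘ .inl, (v ∘ .inr) ∘ .inr, by
      simp only [Sum.elim_comp_inl_inr]⟩
  simp only [whisker2_mulVec, ← Sum.elim_smul_smul, Sum.elim_eq_iff] at heig
  obtain ⟨⟨hx, hy⟩, hz, hw⟩ := heig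
  obtain ⟨rfl, rfl, rfl, rfl⟩ := pathWhisker_eigenvector_eq_zero (mulVecLin L) hlam hx hy hz hw
  simp only [Sum.elim_zero_zero]
end
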